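/- If λ = (λ₁,…,λₙ) ∈ Γ_k with λ₁ ≥ λ₂ ≥ ⋯ ≥ λₙ, then λ₁ · ∂S_k/∂λ₁ (λ) ≥ (k/n) · S_k(λ). -/

import Mathlib

/-- Normalized `k`-th elementary symmetric function on `ℝⁿ`. -/
noncomputable def S (n k : ℕ) (x : Fin n → ℝ) : ℝ :=
  (∑ t ∈ Finset.univ.powersetCard k, ∏ i ∈ t, x i) / (n.choose k : ℝ)

/-- The `k`-positive (Gårding) cone `Γ_k ⊆ ℝⁿ`. -/
def Gamma (n k : ℕ) : Set (Fin n → ℝ) :=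
  {x | ∀ j, 1 ≤ j → j ≤ k → 0 < S n j x}

/-!
Write `λ = (λ₁, μ)`. Then `σ_k(λ) = σ_k(μ) + λ₁ σ_{k-1}(μ)` and `∂σ_k/∂λ₁ = σ_{k-1}(μ)`, so the
claim is `k σ_k(μ) ≤ (n - k) λ₁ σ_{k-1}(μ)`. Newton's inequalities hold for every real multiset:
differentiating `∏ (X - a)` keeps it real-rooted (Rolle) and preserves the normalized `σ_i`, which
reduces them to the case of `j + 2` roots, where they are Cauchy–Schwarz for the products
`∏_{b ≠ a} b`. Newton gives first `σ_j(μ) > 0` for `j < k`, and then, by induction on `j`,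
`(j + 1) σ_{j+1}(μ) ≤ (n - 1 - j) (max μ) σ_j(μ)`; finally `max μ ≤ λ₁`.
-/

namespace Multiset

section CommSemiring

variable {R : Type*} [CommSemiring R]

@[simp]
theorem esymm_zero (s : Multiset R) : s.esymm 0 = 1 := by
  simp [esymm]

theorem esymm_eq_zero_of_card_lt {s : Multiset R} {k : ℕ} (h : card s < k) : s.esymm k = 0 := by
  simp [esymm, powersetCard_eq_empty _ h]

theorem le_card_of_esymm_ne_zero {s : Multiset R} {k : ℕ} (h : s.esymm k ≠ 0) : k ≤ card s := by
  contrapose! h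
  exact esymm_eq_zero_of_card_lt h

theorem esymm_cons_succ (a : R) (s : Multiset R) (k : ℕ) :
    (a ::ₘ s).esymm (k + 1) = s.esymm (k + 1) + a * s.esymm k := by
  simp [esymm, powersetCard_cons, sum_map_mul_left]

theorem esymm_one (s : Multiset R) : s.esymm 1 = s.sum := by
  simp [esymm, powersetCard_one]

theorem esymm_card (s : Multiset R) : s.esymm (card s) = s.prod := by
  simp [esymm, powersetCard_self]

theorem sq_sum_map_eq {α : Type*} [DecidableEq α] (s : Multiset α) (f : α → R) :
    (s.map f).sum ^ 2 =
      (s.map fun a => f a ^ 2).sum + (s.map fun a => f a * ((s.erase a).map f).sum).sum := by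
  rw [sq, ← sum_map_mul_right, ← sum_map_add]
  refine congrArg sum (map_congr rfl fun a ha => ?_)
  rw [← cons_erase ha, map_cons, sum_cons, erase_cons_head]
  ring

end CommSemiring

section CommRing

variable {R : Type*} [CommRing R] [DecidableEq R]

theorem sum_map_esymm_erase (s : Multiset R) (k : ℕ) :
    (s.map fun a => (s.erase a).esymm k).sum = ((card s : R) - k) * s.esymm k := by
  induction s using Multiset.induction generalizing k with
  | empty =>
    cases k with
    | zero => simp
    | succ k => simp [esymm_eq_zero_of_card_lt (s := (0 : Multiset R)) k.succ_pos]
  | cons a s ih =>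
    have hmap : (s.map fun b => ((a ::ₘ s).erase b).esymm k) =
        s.map fun b => (a ::ₘ s.erase b).esymm k :=
      map_congr rfl fun b hb => by rw [erase_cons_tail_of_mem hb]
    rw [map_cons, sum_cons, erase_cons_head, hmap]
    cases k with
    | zero => simp; ring
    | succ k =>
      simp only [esymm_cons_succ, sum_map_add, sum_map_mul_left, ih, card_cons]
      push_cast
      ring

theorem sum_map_prod_erase {s : Multiset R} {j : ℕ}
    (hs : card s = j + 1) : (s.map fun a => (s.erase a).prod).sum = s.esymm j := by
  have hprod : ∀ a ∈ s, (s.erase a).prod = (s.erase a).esymm j := fun a ha => by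
    rw [← esymm_card, card_erase_of_mem ha, hs, Nat.pred_succ]
  rw [map_congr rfl hprod, sum_map_esymm_erase, hs]
  push_cast
  ring

theorem sum_map_prod_erase_mul_sum_erase {s : Multiset R} {j : ℕ} (hs : card s = j + 2) :
    (s.map fun a => (s.erase a).prod * ((s.erase a).map fun b => (s.erase b).prod).sum).sum =
      2 * (s.prod * s.esymm j) := by
  have hrow : ∀ a ∈ s, (s.erase a).prod * ((s.erase a).map fun b => (s.erase b).prod).sum =
      s.prod * (s.erase a).esymm j := by
    intro a ha
    have hcol : ∀ b ∈ s.erase a, (s.erase b).prod = a * ((s.erase a).erase b).prod := by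
      intro b hb
      have hab : a ∈ s.erase b := by
        by_cases h : a = b
        · subst h
          exact hb
        · exact (mem_erase_of_ne h).2 ha
      rw [← prod_erase hab, erase_comm]
    have hcard : card (s.erase a) = j + 1 := by rw [card_erase_of_mem ha, hs, Nat.pred_succ]
    rw [map_congr rfl hcol, sum_map_mul_left, sum_map_prod_erase hcard, ← prod_erase ha]
    ring
  rw [map_congr rfl hrow, sum_map_mul_left, sum_map_esymm_erase, hs]
  push_cast
  ring

end CommRing

section OrderedRing

variable {α R : Type*} [CommRing R] [LinearOrder R] [IsStrictOrderedRing R]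

theorem sq_sum_map_le_card_mul (s : Multiset α) (f : α → R) :
    (s.map f).sum ^ 2 ≤ card s * (s.map fun a => f a ^ 2).sum := by
  classical
  have h := sq_sum_le_card_mul_sum_sq (s := (Finset.univ : Finset ↥s)) (f := fun a => f a)
  rwa [Finset.card_univ, card_coe, Finset.sum, Finset.sum, map_univ, map_univ s (f · ^ 2)] at h

theorem card_mul_sum_map_mul_sum_erase_le [DecidableEq α] (s : Multiset α) (f : α → R) :
    card s * (s.map fun a => f a * ((s.erase a).map f).sum).sum ≤
      (card s - 1) * (s.map f).sum ^ 2 := by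
  have h := sq_sum_map_le_card_mul s f
  rw [sq_sum_map_eq s f] at h ⊢
  linarith

end OrderedRing

theorem newton_esymm_of_card_eq (s : Multiset ℝ) (j : ℕ) (hs : card s = j + 2) :
    2 * (j + 2) * (s.esymm j * s.esymm (j + 2)) ≤ (j + 1) * s.esymm (j + 1) ^ 2 := by
  have h := card_mul_sum_map_mul_sum_erase_le s fun a => (s.erase a).prod
  rw [sum_map_prod_erase_mul_sum_erase hs, sum_map_prod_erase (j := j + 1) hs, hs, ← esymm_card,
    hs] at h
  push_cast at h
  linarith

-- `t` is the multiset of roots of the derivative of `∏ (X - a)`, real by Rolle's theorem.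
open Polynomial in
theorem exists_card_mul_esymm_eq (s : Multiset ℝ) (hs : s ≠ 0) :
    ∃ t : Multiset ℝ, card t + 1 = card s ∧
      ∀ i ≤ card t, (card s : ℝ) * t.esymm i = (card s - i) * s.esymm i := by
  obtain ⟨m, hm⟩ : ∃ m, card s = m + 1 := Nat.exists_eq_succ_of_ne_zero (card_pos.2 hs).ne'
  set p : ℝ[X] := (s.map fun a => X - C a).prod
  have hp_deg : p.natDegree = m + 1 := by rw [natDegree_multiset_prod_X_sub_C_eq_card, hm]
  have hp_coeff : ∀ k ≤ m + 1, p.coeff k = (-1) ^ (m + 1 - k) * s.esymm (m + 1 - k) := by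
    intro k hk
    rw [prod_X_sub_C_coeff s (hm ▸ hk), hm]
  have hroots_le := card_roots_le_derivative p
  have hq_deg_le := natDegree_derivative_le p
  set q := derivative p
  have hq_coeff : ∀ k ≤ m, q.coeff k = (-1) ^ (m - k) * s.esymm (m - k) * (k + 1) := by
    intro k hk
    rw [coeff_derivative, hp_coeff (k + 1) (by omega), show m + 1 - (k + 1) = m - k by omega]
  have hq_lead : q.coeff m = m + 1 := by simp [hq_coeff m le_rfl]
  have hq_deg : q.natDegree = m := by
    refine le_antisymm ?_ (le_natDegree_of_ne_zero (by rw [hq_lead]; positivity))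
    omega
  have hq_roots : card q.roots = q.natDegree := by
    refine le_antisymm (card_roots' q) ?_
    rw [roots_multiset_prod_X_sub_C, hm] at hroots_le
    omega
  refine ⟨q.roots, by rw [hq_roots, hq_deg, hm], fun i hi => ?_⟩
  rw [hq_roots, hq_deg] at hi
  have h := coeff_eq_esymm_roots_of_card hq_roots (k := m - i) (by omega)
  rw [hq_coeff _ (by omega), leadingCoeff, hq_deg, hq_lead, show m - (m - i) = i by omega,
    Nat.cast_sub hi] at h
  have hsign : ((-1 : ℝ) ^ i) ≠ 0 := pow_ne_zero _ (by norm_num)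
  rw [hm]
  push_cast
  apply mul_left_cancel₀ hsign
  linear_combination -h

/-- Newton's inequality `E_j E_{j+2} ≤ E_{j+1}²` for `E_i = σ_i / (card s).choose i`, with the
binomial coefficients cleared; in this form it holds for every `j`. -/
theorem newton_esymm (s : Multiset ℝ) (j : ℕ) :
    (j + 2) * ((card s : ℝ) - j) * (s.esymm j * s.esymm (j + 2)) ≤
      (j + 1) * ((card s : ℝ) - j - 1) * s.esymm (j + 1) ^ 2 := by
  obtain ⟨m, hm⟩ : ∃ m, card s = m := ⟨_, rfl⟩
  induction m using Nat.strong_induction_on generalizing s with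
  | _ m ih =>
    rcases lt_trichotomy m (j + 2) with hlt | rfl | hgt
    · rw [esymm_eq_zero_of_card_lt (k := j + 2) (by omega)]
      rcases (Nat.lt_succ_iff.1 hlt).lt_or_eq with hlt' | rfl
      · simp [esymm_eq_zero_of_card_lt (s := s) (k := j + 1) (by omega)]
      · simp [hm]
    · have := newton_esymm_of_card_eq s j hm
      rw [hm]
      push_cast
      linarith
    · obtain ⟨t, ht, hst⟩ := exists_card_mul_esymm_eq s (card_pos.1 (by omega))
      rw [hm] at ht hst
      have hm0 : (0 : ℝ) < m := by exact_mod_cast (show 0 < m by omega)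
      have hT : ∀ i ≤ card t, t.esymm i = (m - i) / m * s.esymm i := fun i hi => by
        rw [div_mul_eq_mul_div, eq_div_iff hm0.ne', mul_comm, hst i hi]
      have IH := ih (card t) (by omega) t rfl
      rw [hT j (by omega), hT (j + 1) (by omega), hT (j + 2) (by omega),
        show (card t : ℝ) = m - 1 by rw [← ht]; push_cast; ring] at IH
      push_cast at IH
      have hc : (0 : ℝ) < (m - j - 1) * (m - j - 2) / m ^ 2 := by
        have : (j : ℝ) + 2 < m := by exact_mod_cast hgt
        apply div_pos _ (by positivity)
        nlinarith
      rw [hm]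
      refine le_of_mul_le_mul_left ((Eq.trans_le ?_ IH).trans_eq ?_) hc <;> ring

theorem esymm_pos_of_cons {a : ℝ} {s : Multiset ℝ} {k : ℕ}
    (h : ∀ j, 1 ≤ j → j ≤ k + 1 → 0 < (a ::ₘ s).esymm j) : 0 < s.esymm k := by
  induction k with
  | zero => simp
  | succ k ih =>
    have hk := ih fun j h1 h2 => h j h1 (by omega)
    -- Otherwise the cone inequalities at `k + 1` and `k + 2` force `σ_{k+1}² < σ_k σ_{k+2}`.
    by_contra! hle
    have h1 := h (k + 1) (by omega) (by omega)
    have h2 := h (k + 2) (by omega) le_rfl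
    have hcard : (k : ℝ) + 1 ≤ card s := by
      have := le_card_of_esymm_ne_zero h2.ne'
      rw [card_cons] at this
      exact_mod_cast (by omega : k + 1 ≤ card s)
    rw [esymm_cons_succ] at h1 h2
    have hsq : s.esymm (k + 1) ^ 2 < s.esymm k * s.esymm (k + 2) := by nlinarith
    have hN := newton_esymm s k
    nlinarith [mul_le_mul_of_nonneg_left hsq.le
      (by nlinarith : (0 : ℝ) ≤ (k + 1) * (card s - k - 1))]

theorem succ_mul_esymm_succ_le {s : Multiset ℝ} {M : ℝ} (hM : ∀ x ∈ s, x ≤ M) {j : ℕ}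
    (hpos : ∀ i ≤ j, 0 < s.esymm i) :
    (j + 1) * s.esymm (j + 1) ≤ (card s - j) * M * s.esymm j := by
  induction j with
  | zero => simpa [esymm_one] using sum_le_card_nsmul s M hM
  | succ j ih =>
    have IH := ih fun i hi => hpos i (by omega)
    have hj := hpos j (by omega)
    have hj1 := hpos (j + 1) le_rfl
    have hcard : (j : ℝ) + 1 ≤ card s := by
      exact_mod_cast le_card_of_esymm_ne_zero hj1.ne'
    push_cast
    refine le_of_mul_le_mul_left ?_ (by nlinarith : (0 : ℝ) < (card s - j) * s.esymm j)
    calc (card s - j) * s.esymm j * ((j + 1 + 1) * s.esymm (j + 1 + 1))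
        = (j + 2) * (card s - j) * (s.esymm j * s.esymm (j + 2)) := by ring
      _ ≤ (j + 1) * (card s - j - 1) * s.esymm (j + 1) ^ 2 := newton_esymm s j
      _ = (card s - j - 1) * s.esymm (j + 1) * ((j + 1) * s.esymm (j + 1)) := by ring
      _ ≤ (card s - j - 1) * s.esymm (j + 1) * ((card s - j) * M * s.esymm j) :=
        mul_le_mul_of_nonneg_left IH (mul_nonneg (by linarith) hj1.le)
      _ = (card s - j) * s.esymm j * ((card s - (j + 1)) * M * s.esymm (j + 1)) := by ring

theorem succ_mul_esymm_cons_le {a : ℝ} {s : Multiset ℝ} (hmax : ∀ x ∈ s, x ≤ a) {k : ℕ}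
    (hpos : ∀ j, 1 ≤ j → j ≤ k + 1 → 0 < (a ::ₘ s).esymm j) :
    (k + 1) * (a ::ₘ s).esymm (k + 1) ≤ (card s + 1) * a * s.esymm k := by
  have h := succ_mul_esymm_succ_le (j := k) hmax fun i hi =>
    esymm_pos_of_cons (k := i) fun j h1 h2 => hpos j h1 (by omega)
  rw [esymm_cons_succ]
  linarith

end Multiset

theorem Finset.val_map_eq_cons_erase {ι R : Type*} [DecidableEq ι] {s : Finset ι} {i : ι}
    (hi : i ∈ s) (f : ι → R) : s.val.map f = f i ::ₘ (s.erase i).val.map f := by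
  rw [Finset.erase_val, ← Multiset.map_cons, Multiset.cons_erase hi]

theorem S_eq_esymm (n k : ℕ) (x : Fin n → ℝ) :
    S n k x = (Finset.univ.val.map x).esymm k / n.choose k := by
  rw [S, Finset.esymm_map_val]

theorem differentiable_S (n k : ℕ) : Differentiable ℝ (S n k) := by
  unfold S
  fun_prop

theorem fderiv_S_apply_single (n k : ℕ) (x : Fin n → ℝ) (i : Fin n) :
    fderiv ℝ (S n (k + 1)) x (Pi.single i 1) =
      ((Finset.univ.erase i).val.map x).esymm k / n.choose (k + 1) := by
  set μ := (Finset.univ.erase i).val.map x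
  have hline : ∀ t : ℝ, S n (k + 1) (x + t • Pi.single i 1) =
      (μ.esymm (k + 1) + (x i + t) * μ.esymm k) / n.choose (k + 1) := by
    intro t
    have hμ : (Finset.univ.erase i).val.map (x + t • Pi.single i 1) = μ :=
      Multiset.map_congr rfl fun j hj => by simp [Finset.ne_of_mem_erase (Finset.mem_def.2 hj)]
    rw [S_eq_esymm, Finset.val_map_eq_cons_erase (Finset.mem_univ i), hμ, Multiset.esymm_cons_succ]
    simp
  have hderiv : HasDerivAt (fun t : ℝ => S n (k + 1) (x + t • Pi.single i 1))
      (μ.esymm k / n.choose (k + 1)) 0 := by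
    simp_rw [hline]
    simpa using (((hasDerivAt_id (0 : ℝ)).const_add (x i)).mul_const (μ.esymm k)).const_add
      (μ.esymm (k + 1)) |>.div_const (n.choose (k + 1) : ℝ)
  rw [← (differentiable_S n (k + 1) x).lineDeriv_eq_fderiv, lineDeriv, hderiv.deriv]

theorem esymm_pos_of_mem_Gamma {n k : ℕ} {x : Fin n → ℝ} (hx : x ∈ Gamma n k) {j : ℕ}
    (h1 : 1 ≤ j) (h2 : j ≤ k) : 0 < (Finset.univ.val.map x).esymm j := by
  have h := hx j h1 h2
  rw [S_eq_esymm] at h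
  exact ((div_pos_iff.1 h).resolve_right fun h => h.2.not_ge (Nat.cast_nonneg _)).1

theorem lam1_mul_partial_Sk_ge_general (n k : ℕ) (hn : 0 < n) (hk1 : 1 ≤ k)
    (lam : Fin n → ℝ) (hlam : lam ∈ Gamma n k)
    (hsort : ∀ i j : Fin n, i ≤ j → lam j ≤ lam i) :
    lam ⟨0, hn⟩ * fderiv ℝ (S n k) lam (Pi.single ⟨0, hn⟩ 1) ≥
      ((k : ℝ) / n) * S n k lam := by
  obtain ⟨k, rfl⟩ : ∃ k', k = k' + 1 := ⟨k - 1, by omega⟩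
  set i₀ : Fin n := ⟨0, hn⟩
  set μ := (Finset.univ.erase i₀).val.map lam
  have hcons : Finset.univ.val.map lam = lam i₀ ::ₘ μ :=
    Finset.val_map_eq_cons_erase (Finset.mem_univ i₀) lam
  have hcard : (Multiset.card μ : ℝ) + 1 = n := by
    exact_mod_cast (by simpa using congrArg Multiset.card hcons.symm)
  have hpos : ∀ j, 1 ≤ j → j ≤ k + 1 → 0 < (lam i₀ ::ₘ μ).esymm j := fun j h1 h2 =>
    hcons ▸ esymm_pos_of_mem_Gamma hlam h1 h2
  have hmax : ∀ x ∈ μ, x ≤ lam i₀ := fun x hx => by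
    obtain ⟨i, -, rfl⟩ := Multiset.mem_map.1 hx
    exact hsort i₀ i (Fin.le_iff_val_le_val.2 (Nat.zero_le _))
  have key := Multiset.succ_mul_esymm_cons_le hmax hpos
  rw [hcard] at key
  rw [ge_iff_le, fderiv_S_apply_single, S_eq_esymm, hcons]
  calc ((k + 1 : ℕ) : ℝ) / n * ((lam i₀ ::ₘ μ).esymm (k + 1) / n.choose (k + 1))
      = (k + 1) * (lam i₀ ::ₘ μ).esymm (k + 1) / n / n.choose (k + 1) := by push_cast; ring
    _ ≤ lam i₀ * μ.esymm k / n.choose (k + 1) := by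
      gcongr
      rw [div_le_iff₀ (by exact_mod_cast hn)]
      linarith
    _ = lam i₀ * (μ.esymm k / n.choose (k + 1)) := by ring

theorem lam1_mul_partial_Sk_ge (n k : ℕ) (hn : 0 < n) (hk1 : 1 ≤ k) (hkn : k ≤ n)
    (lam : Fin n → ℝ) (hlam : lam ∈ Gamma n k)
    (hsort : ∀ i j : Fin n, i ≤ j → lam j ≤ lam i) :
    lam ⟨0, hn⟩ * fderiv ℝ (S n k) lam (Pi.single ⟨0, hn⟩ 1) ≥
      ((k : ℝ) / n) * S n k lam :=
  lam1_mul_partial_Sk_ge_general n k hn hk1 lam hlam hsort
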